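/- arXiv:2406.01282 — 2 statements merged into one kernel-verified Lean document; each statement's English description precedes it below -/
import Mathlib

section
/- (Consequence of Proposition 1.) Let κ < 0, let x and y be points of the Poincaré ball of curvature κ with y ≠ x, and let 0 < δ < τ. Define z = exp^κ_x((δ/τ) · log^κ_x(y)). Then dκ(z, y) = (1 − δ/τ) · dκ(x, y). -/
open Real Filter

open scoped RealInnerProductSpace

/-- Inverse hyperbolic tangent. -/
noncomputable def artanh (x : ℝ) : ℝ := (1 / 2) * Real.log ((1 + x) / (1 - x))

variable {E : Type*} [NormedAddCommGroup E] [InnerProductSpace ℝ E]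

/-- Möbius (gyrovector) addition on the Poincaré ball of curvature `κ`. -/
noncomputable def mAdd (κ : ℝ) (x y : E) : E :=
  (1 - 2 * κ * ⟪x, y⟫ + κ ^ 2 * ‖x‖ ^ 2 * ‖y‖ ^ 2)⁻¹ •
    ((1 - 2 * κ * ⟪x, y⟫ - κ * ‖y‖ ^ 2) • x + (1 + κ * ‖x‖ ^ 2) • y)

/-- Conformal factor `λκ(x) = 2 / (1 + κ‖x‖²)`. -/
noncomputable def lam (κ : ℝ) (x : E) : ℝ := 2 / (1 + κ * ‖x‖ ^ 2)

open Classical in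
/-- Möbius scalar multiplication `r ⊗κ x`. -/
noncomputable def mSmul (κ r : ℝ) (x : E) : E :=
  if x = 0 then 0
  else ((1 / Real.sqrt (-κ)) * Real.tanh (r * _root_.artanh (Real.sqrt (-κ) * ‖x‖)) * ‖x‖⁻¹) • x

open Classical in
/-- Exponential map of the Poincaré ball at `x` with curvature `κ`. -/
noncomputable def expMap (κ : ℝ) (x v : E) : E :=
  if v = 0 then x
  else mAdd κ x
    ((Real.tanh (Real.sqrt (-κ) * lam κ x * ‖v‖ / 2) / (Real.sqrt (-κ) * ‖v‖)) • v)

/-- Logarithmic map of the Poincaré ball at `x` with curvature `κ`. -/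
noncomputable def logMap (κ : ℝ) (x y : E) : E :=
  ((2 / (Real.sqrt (-κ) * lam κ x)) * _root_.artanh (Real.sqrt (-κ) * ‖mAdd κ (-x) y‖) *
      ‖mAdd κ (-x) y‖⁻¹) • mAdd κ (-x) y

/-- Geodesic distance of the Poincaré ball of curvature `κ`. -/
noncomputable def dK (κ : ℝ) (x y : E) : ℝ :=
  (2 / Real.sqrt (-κ)) * _root_.artanh (Real.sqrt (-κ) * ‖mAdd κ (-x) y‖)

/-- Membership in the Poincaré ball of curvature `κ`: `κ·‖x‖² > −1`. -/
def inBall (κ : ℝ) (x : E) : Prop := κ * ‖x‖ ^ 2 > -1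


/-!
Write `w = (-x) ⊕ y`, so that `y = x ⊕ w` by left cancellation and `exp_x(s · log_x y) = x ⊕ (s ⊗ w)`.
Left Möbius translation `u ↦ x ⊕ u` preserves `dK`: the quantity
`‖(-a) ⊕ b‖² / (1 + κ‖(-a) ⊕ b‖²) = ‖b - a‖² / ((1 + κ‖a‖²)(1 + κ‖b‖²))` is increasing in
`‖(-a) ⊕ b‖`, and `x ⊕ ·` multiplies numerator and denominator of the right-hand side by the same
factor. This reduces the claim to `dK (s ⊗ w) w`, where both points lie on the line through `w`;
writing `c‖w‖ = tanh A`, the subtraction formula for `tanh` gives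
`c‖(-(s ⊗ w)) ⊕ w‖ = |tanh ((1 - s) A)|`.
-/

open Set

namespace Real

lemma tanh_nonneg {t : ℝ} (ht : 0 ≤ t) : 0 ≤ tanh t := by
  rw [tanh_eq_sinh_div_cosh]
  exact div_nonneg (sinh_nonneg_iff.2 ht) (cosh_pos t).le

lemma abs_tanh (t : ℝ) : |tanh t| = tanh |t| := by
  rcases le_total 0 t with ht | ht
  · rw [abs_of_nonneg ht, abs_of_nonneg (tanh_nonneg ht)]
  · rw [abs_of_nonpos ht, tanh_neg, abs_of_nonpos (by simpa using tanh_nonneg (neg_nonneg.2 ht))]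

lemma tanh_sub (s t : ℝ) : tanh (s - t) = (tanh s - tanh t) / (1 - tanh s * tanh t) := by
  have hs := cosh_pos s
  have ht := cosh_pos t
  simp only [tanh_eq_sinh_div_cosh, sinh_sub, cosh_sub]
  field_simp

end Real

lemma artanh_eq_real_artanh {u : ℝ} (hu : u ∈ Icc (-1) 1) : _root_.artanh u = Real.artanh u :=
  (Real.artanh_eq_half_log hu).symm

lemma inBall_iff_pos {F : Type*} [NormedAddCommGroup F] {κ : ℝ} {x : F} :
    inBall κ x ↔ 0 < 1 + κ * ‖x‖ ^ 2 := by
  rw [inBall, gt_iff_lt, ← neg_lt_iff_pos_add']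

lemma inBall_iff_sqrt_mul_norm_lt_one {F : Type*} [NormedAddCommGroup F] {κ : ℝ} (hκ : κ ≤ 0)
    {x : F} : inBall κ x ↔ √(-κ) * ‖x‖ < 1 := by
  rw [← sq_lt_one_iff₀ (by positivity), mul_pow, Real.sq_sqrt (neg_nonneg.2 hκ), inBall_iff_pos]
  constructor <;> intro h <;> linarith

lemma inBall.neg {F : Type*} [NormedAddCommGroup F] {κ : ℝ} {x : F} (hx : inBall κ x) :
    inBall κ (-x) := by
  rwa [inBall, norm_neg]

noncomputable def mAddDenom (κ : ℝ) (x y : E) : ℝ :=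
  1 - 2 * κ * ⟪x, y⟫ + κ ^ 2 * ‖x‖ ^ 2 * ‖y‖ ^ 2

section MobiusAddition

variable (κ : ℝ)

lemma mAdd_eq_smul (x y : E) : mAdd κ x y =
    (mAddDenom κ x y)⁻¹ • ((1 - 2 * κ * ⟪x, y⟫ - κ * ‖y‖ ^ 2) • x + (1 + κ * ‖x‖ ^ 2) • y) :=
  rfl

@[simp] lemma mAdd_zero_left (y : E) : mAdd κ 0 y = y := by simp [mAdd]

@[simp] lemma mAdd_zero_right (x : E) : mAdd κ x 0 = x := by simp [mAdd]

lemma norm_sq_mAdd (x y : E) : ‖mAdd κ x y‖ ^ 2 = ‖x + y‖ ^ 2 / mAddDenom κ x y := by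
  have hnum : ‖(1 - 2 * κ * ⟪x, y⟫ - κ * ‖y‖ ^ 2) • x + (1 + κ * ‖x‖ ^ 2) • y‖ ^ 2 =
      mAddDenom κ x y * ‖x + y‖ ^ 2 := by
    simp only [← real_inner_self_eq_norm_sq, mAddDenom, inner_add_left, inner_add_right,
      real_inner_smul_left, real_inner_smul_right, real_inner_comm x y]
    ring
  rw [mAdd_eq_smul, norm_smul, mul_pow, hnum, norm_inv, inv_pow, Real.norm_eq_abs, sq_abs]
  rcases eq_or_ne (mAddDenom κ x y) 0 with h | h
  · simp [h]
  · field_simp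

lemma one_add_mul_norm_sq_mAdd {x y : E} (h : mAddDenom κ x y ≠ 0) :
    1 + κ * ‖mAdd κ x y‖ ^ 2 = (1 + κ * ‖x‖ ^ 2) * (1 + κ * ‖y‖ ^ 2) / mAddDenom κ x y := by
  rw [norm_sq_mAdd, norm_add_sq_real]
  field_simp
  rw [mAddDenom]
  ring

variable {κ}

lemma mAddDenom_pos (hκ : κ ≤ 0) {x y : E} (hx : inBall κ x) (hy : inBall κ y) :
    0 < mAddDenom κ x y := by
  rw [inBall_iff_pos] at hx hy
  have hxy : |⟪x, y⟫| ≤ ‖x‖ * ‖y‖ := abs_real_inner_le_norm x y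
  have hprod : 0 < (1 + κ * ‖x‖ ^ 2) * (1 + κ * ‖y‖ ^ 2) := mul_pos hx hy
  unfold mAddDenom
  nlinarith [abs_le.1 hxy, sq_nonneg (‖x‖ - ‖y‖), norm_nonneg x, norm_nonneg y]

lemma inBall_mAdd (hκ : κ ≤ 0) {x y : E} (hx : inBall κ x) (hy : inBall κ y) :
    inBall κ (mAdd κ x y) := by
  have hD := mAddDenom_pos hκ hx hy
  rw [inBall_iff_pos] at hx hy ⊢
  rw [one_add_mul_norm_sq_mAdd κ hD.ne']
  positivity

lemma mAdd_left_cancel (hκ : κ ≤ 0) {x y : E} (hx : inBall κ x) (hy : inBall κ y) :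
    mAdd κ x (mAdd κ (-x) y) = y := by
  have hD := (mAddDenom_pos hκ hx.neg hy).ne'
  have hx' := (inBall_iff_pos.1 hx).ne'
  have hD_eq : mAddDenom κ (-x) y = 1 + 2 * κ * ⟪x, y⟫ + κ ^ 2 * ‖x‖ ^ 2 * ‖y‖ ^ 2 := by
    rw [mAddDenom, inner_neg_left, norm_neg]
    ring
  have hww := norm_sq_mAdd κ (-x) y
  rw [neg_add_eq_sub, norm_sub_sq_real, real_inner_comm] at hww
  have hw : mAdd κ (-x) y = (mAddDenom κ (-x) y)⁻¹ •
      ((-(1 + 2 * κ * ⟪x, y⟫ - κ * ‖y‖ ^ 2)) • x + (1 + κ * ‖x‖ ^ 2) • y) := by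
    rw [mAdd_eq_smul, inner_neg_left, norm_neg, smul_neg, ← neg_smul]
    ring_nf
  generalize mAddDenom κ (-x) y = D at *
  generalize mAdd κ (-x) y = w at *
  have hxw : ⟪x, w⟫ = D⁻¹ * (-(1 + 2 * κ * ⟪x, y⟫ - κ * ‖y‖ ^ 2) * ‖x‖ ^ 2
      + (1 + κ * ‖x‖ ^ 2) * ⟪x, y⟫) := by
    rw [hw, real_inner_smul_right, inner_add_right, real_inner_smul_right, real_inner_smul_right,
      real_inner_self_eq_norm_sq]
  have hDw : mAddDenom κ x w = (1 + κ * ‖x‖ ^ 2) ^ 2 / D := by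
    rw [mAddDenom, hxw, hww, eq_div_iff hD]
    field_simp
    rw [hD_eq]
    ring
  rw [mAdd_eq_smul, hDw, hxw, hww, hw]
  match_scalars
  · field_simp
    rw [hD_eq]
    ring
  · field_simp

lemma norm_sq_mAdd_sub_mAdd {x u v : E} (hu : mAddDenom κ x u ≠ 0) (hv : mAddDenom κ x v ≠ 0) :
    ‖mAdd κ x u - mAdd κ x v‖ ^ 2 =
      (1 + κ * ‖x‖ ^ 2) ^ 2 * ‖u - v‖ ^ 2 / (mAddDenom κ x u * mAddDenom κ x v) := by
  have hinner : ⟪mAdd κ x u, mAdd κ x v⟫ = (mAddDenom κ x u * mAddDenom κ x v)⁻¹ *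
      ((1 - 2 * κ * ⟪x, u⟫ - κ * ‖u‖ ^ 2) * (1 - 2 * κ * ⟪x, v⟫ - κ * ‖v‖ ^ 2) * ‖x‖ ^ 2
        + (1 - 2 * κ * ⟪x, u⟫ - κ * ‖u‖ ^ 2) * (1 + κ * ‖x‖ ^ 2) * ⟪x, v⟫
        + (1 + κ * ‖x‖ ^ 2) * (1 - 2 * κ * ⟪x, v⟫ - κ * ‖v‖ ^ 2) * ⟪x, u⟫
        + (1 + κ * ‖x‖ ^ 2) ^ 2 * ⟪u, v⟫) := by
    simp only [mAdd_eq_smul, inner_add_left, inner_add_right, real_inner_smul_left,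
      real_inner_smul_right, real_inner_self_eq_norm_sq, real_inner_comm u x, mul_inv]
    ring
  rw [norm_sub_sq_real, norm_sq_mAdd, norm_sq_mAdd, hinner, norm_add_sq_real, norm_add_sq_real,
    norm_sub_sq_real]
  field_simp
  simp only [mAddDenom]
  ring

lemma norm_sq_mAdd_neg_div (hκ : κ ≤ 0) {x y : E} (hx : inBall κ x) (hy : inBall κ y) :
    ‖mAdd κ (-x) y‖ ^ 2 / (1 + κ * ‖mAdd κ (-x) y‖ ^ 2) =
      ‖y - x‖ ^ 2 / ((1 + κ * ‖x‖ ^ 2) * (1 + κ * ‖y‖ ^ 2)) := by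
  have hD := (mAddDenom_pos hκ hx.neg hy).ne'
  rw [one_add_mul_norm_sq_mAdd κ hD, norm_sq_mAdd, norm_neg, neg_add_eq_sub]
  field_simp

lemma dK_mAdd_mAdd (hκ : κ ≤ 0) {x u v : E} (hx : inBall κ x) (hu : inBall κ u)
    (hv : inBall κ v) : dK κ (mAdd κ x u) (mAdd κ x v) = dK κ u v := by
  suffices ‖mAdd κ (-mAdd κ x u) (mAdd κ x v)‖ = ‖mAdd κ (-u) v‖ by rw [dK, dK, this]
  have hxu := mAddDenom_pos hκ hx hu
  have hxv := mAddDenom_pos hκ hx hv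
  have hx' := inBall_iff_pos.1 hx
  have h₁ := inBall_iff_pos.1 (inBall_mAdd hκ (inBall_mAdd hκ hx hu).neg (inBall_mAdd hκ hx hv))
  have h₂ := inBall_iff_pos.1 (inBall_mAdd hκ hu.neg hv)
  have hratio : ‖mAdd κ x v - mAdd κ x u‖ ^ 2 /
      ((1 + κ * ‖mAdd κ x u‖ ^ 2) * (1 + κ * ‖mAdd κ x v‖ ^ 2)) =
      ‖v - u‖ ^ 2 / ((1 + κ * ‖u‖ ^ 2) * (1 + κ * ‖v‖ ^ 2)) := by
    rw [norm_sq_mAdd_sub_mAdd hxv.ne' hxu.ne', one_add_mul_norm_sq_mAdd κ hxu.ne',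
      one_add_mul_norm_sq_mAdd κ hxv.ne']
    field_simp
  have key := norm_sq_mAdd_neg_div hκ (inBall_mAdd hκ hx hu) (inBall_mAdd hκ hx hv)
  rw [hratio, ← norm_sq_mAdd_neg_div hκ hu hv, div_eq_div_iff h₁.ne' h₂.ne'] at key
  refine (pow_left_inj₀ (norm_nonneg _) (norm_nonneg _) two_ne_zero).1 ?_
  linear_combination key

variable (κ) in
lemma mAdd_smul_smul (a b : ℝ) (w : E) :
    mAdd κ (a • w) (b • w) = ((a + b) / (1 - κ * a * b * ‖w‖ ^ 2)) • w := by
  have hD : mAddDenom κ (a • w) (b • w) = (1 - κ * a * b * ‖w‖ ^ 2) ^ 2 := by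
    simp only [mAddDenom, real_inner_smul_left, real_inner_smul_right, norm_smul,
      real_inner_self_eq_norm_sq, Real.norm_eq_abs, mul_pow, sq_abs]
    ring
  rw [mAdd_eq_smul, hD, smul_smul, smul_smul, ← add_smul, smul_smul]
  congr 1
  simp only [real_inner_smul_left, real_inner_smul_right, norm_smul, real_inner_self_eq_norm_sq,
    Real.norm_eq_abs, mul_pow, sq_abs]
  rcases eq_or_ne (1 - κ * a * b * ‖w‖ ^ 2) 0 with h | h
  · simp [h]
  · field_simp
    ring

lemma expMap_smul_logMap (hκ : κ < 0) {x : E} (hx : inBall κ x) (s : ℝ) (y : E) :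
    expMap κ x (s • logMap κ x y) = mAdd κ x (mSmul κ s (mAdd κ (-x) y)) := by
  rw [logMap]
  generalize mAdd κ (-x) y = w
  have hc : 0 < √(-κ) := Real.sqrt_pos.2 (neg_pos.2 hκ)
  have hlam : 0 < lam κ x := div_pos two_pos (inBall_iff_pos.1 hx)
  rcases eq_or_ne w 0 with rfl | hw
  · simp [expMap, mSmul]
  have hk : 0 < 2 / (√(-κ) * lam κ x * ‖w‖) := by positivity
  have hv : s • ((2 / (√(-κ) * lam κ x)) * _root_.artanh (√(-κ) * ‖w‖) * ‖w‖⁻¹) • w =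
      (2 / (√(-κ) * lam κ x * ‖w‖) * (s * _root_.artanh (√(-κ) * ‖w‖))) • w := by
    rw [smul_smul]
    congr 1
    field_simp
  rw [hv, mSmul, if_neg hw]
  generalize s * _root_.artanh (√(-κ) * ‖w‖) = t
  rcases eq_or_ne t 0 with rfl | ht
  · simp [expMap]
  rw [expMap, if_neg (smul_ne_zero (mul_ne_zero hk.ne' ht) hw), smul_smul,
    norm_smul, Real.norm_eq_abs, abs_mul, abs_of_pos hk]
  have harg : √(-κ) * lam κ x * (2 / (√(-κ) * lam κ x * ‖w‖) * |t| * ‖w‖) / 2 = |t| := by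
    field_simp
  rw [harg]
  congr 2
  rcases lt_or_gt_of_ne ht with ht | ht
  · rw [abs_of_neg ht, Real.tanh_neg]
    field_simp
  · rw [abs_of_pos ht]
    field_simp

lemma inBall_mSmul (hκ : κ < 0) (s : ℝ) (w : E) : inBall κ (mSmul κ s w) := by
  have hc : 0 < √(-κ) := Real.sqrt_pos.2 (neg_pos.2 hκ)
  rw [inBall_iff_sqrt_mul_norm_lt_one hκ.le, mSmul]
  split_ifs with hw
  · simp
  · have hwpos : 0 < ‖w‖ := norm_pos_iff.2 hw
    rw [norm_smul, Real.norm_eq_abs, abs_mul, abs_mul, abs_of_pos (one_div_pos.2 hc),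
      abs_of_pos (inv_pos.2 hwpos)]
    field_simp
    exact Real.abs_tanh_lt_one _

lemma dK_mSmul_self (hκ : κ < 0) {w : E} (hw : inBall κ w) (s : ℝ) :
    dK κ (mSmul κ s w) w = |1 - s| * dK κ 0 w := by
  rcases eq_or_ne w 0 with rfl | hw0
  · simp [mSmul, dK, _root_.artanh]
  have hc : 0 < √(-κ) := Real.sqrt_pos.2 (neg_pos.2 hκ)
  have hc2 : √(-κ) ^ 2 = -κ := Real.sq_sqrt (neg_nonneg.2 hκ.le)
  have hT : √(-κ) * ‖w‖ ∈ Ioo (-1) 1 :=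
    ⟨by linarith [mul_pos hc (norm_pos_iff.2 hw0)],
      (inBall_iff_sqrt_mul_norm_lt_one hκ.le).1 hw⟩
  have hA := artanh_eq_real_artanh (Ioo_subset_Icc_self hT)
  have hA0 : 0 ≤ _root_.artanh (√(-κ) * ‖w‖) := hA ▸ Real.artanh_nonneg (by positivity)
  set A := _root_.artanh (√(-κ) * ‖w‖)
  have htanh : Real.tanh A = √(-κ) * ‖w‖ := hA ▸ Real.tanh_artanh hT
  have hdist : √(-κ) * ‖mAdd κ (-mSmul κ s w) w‖ = |Real.tanh ((1 - s) * A)| := by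
    have h := mAdd_smul_smul κ (-((1 / √(-κ)) * Real.tanh (s * A) * ‖w‖⁻¹)) 1 w
    rw [one_smul, neg_smul] at h
    rw [mSmul, if_neg hw0, h, norm_smul, Real.norm_eq_abs, ← abs_of_pos hc,
      ← abs_of_pos (norm_pos_iff.2 hw0), ← abs_mul, ← abs_mul, abs_of_pos hc,
      abs_of_pos (norm_pos_iff.2 hw0), sub_mul, one_mul, Real.tanh_sub, htanh]
    congr 1
    field_simp
    have hκc : √(-κ) - -(κ * Real.tanh (s * A) * ‖w‖) =
        √(-κ) * (1 - √(-κ) * Real.tanh (s * A) * ‖w‖) := by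
      linear_combination Real.tanh (s * A) * ‖w‖ * hc2
    rw [hκc, mul_div_mul_left _ _ hc.ne', neg_add_eq_sub]
  rw [dK, hdist, Real.abs_tanh,
    artanh_eq_real_artanh (Ioo_subset_Icc_self ⟨Real.neg_one_lt_tanh _, Real.tanh_lt_one _⟩),
    Real.artanh_tanh, abs_mul, abs_of_nonneg hA0, dK, neg_zero, mAdd_zero_left]
  ring

theorem dK_expMap_smul_logMap (hκ : κ < 0) {x y : E} (hx : inBall κ x) (hy : inBall κ y)
    (s : ℝ) : dK κ (expMap κ x (s • logMap κ x y)) y = |1 - s| * dK κ x y := by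
  have hw := inBall_mAdd hκ.le hx.neg hy
  calc dK κ (expMap κ x (s • logMap κ x y)) y
      = dK κ (mAdd κ x (mSmul κ s (mAdd κ (-x) y))) (mAdd κ x (mAdd κ (-x) y)) := by
        rw [expMap_smul_logMap hκ hx, mAdd_left_cancel hκ.le hx hy]
    _ = dK κ (mSmul κ s (mAdd κ (-x) y)) (mAdd κ (-x) y) :=
        dK_mAdd_mAdd hκ.le hx (inBall_mSmul hκ _ _) hw
    _ = |1 - s| * dK κ 0 (mAdd κ (-x) y) := dK_mSmul_self hκ hw s
    _ = |1 - s| * dK κ x y := by rw [dK, dK, neg_zero, mAdd_zero_left]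

end MobiusAddition

theorem dist_interpolation_to_endpoint_general
    (κ : ℝ) (hκ : κ < 0) (x y : E) (hx : inBall κ x) (hy : inBall κ y)
    (δ τ : ℝ) (hδ : 0 < δ) (hδτ : δ < τ) :
    dK κ (expMap κ x ((δ / τ) • logMap κ x y)) y = (1 - δ / τ) * dK κ x y := by
  rw [dK_expMap_smul_logMap hκ hx hy, abs_of_pos (sub_pos.2 ((div_lt_one (hδ.trans hδτ)).2 hδτ))]

theorem dist_interpolation_to_endpoint
    (κ : ℝ) (hκ : κ < 0) (x y : E) (hx : inBall κ x) (hy : inBall κ y) (hxy : y ≠ x)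
    (δ τ : ℝ) (hδ : 0 < δ) (hδτ : δ < τ) :
    dK κ (expMap κ x ((δ / τ) • logMap κ x y)) y = (1 - δ / τ) * dK κ x y :=
  dist_interpolation_to_endpoint_general κ hκ x y hx hy δ τ hδ hδτ
end

section
/- (Hyperbolic Euler step converges to the Euclidean Euler step in the flat limit.) Fix points x ≠ w of a real inner product space and a step size τ ∈ (0, 1]. Then the map κ ↦ exp^κ_x(τ · log^κ_x(w)) tends to x + τ·(w − x) as κ → 0 from the left (κ → 0⁻ along negative reals). -/
open Real Filter

open scoped RealInnerProductSpace

variable {E : Type*} [NormedAddCommGroup E] [InnerProductSpace ℝ E]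

open Topology

/-!
As `κ → 0⁻` the scale `c = √(-κ)` tends to `0`, the conformal factor to `2`, and Möbius addition
degenerates to vector addition. The only singular ingredients of `exp` and `log` are the quotients
`tanh s / s` and `artanh s / s`; written as `dslope tanh 0 s` and `dslope artanh 0 s`, which extend
them continuously by the value `1` at `s = 0`, both maps become continuous in `κ` up to `κ = 0`,
where they are `v ↦ x + v` and `y ↦ y - x`.
-/

lemma hasDerivAt_artanh_zero : HasDerivAt _root_.artanh 1 0 := by
  have h : HasDerivAt (fun t : ℝ => (1 + t) / (1 - t)) 2 0 :=
    (((hasDerivAt_id' (0 : ℝ)).const_add 1).fun_div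
      ((hasDerivAt_id' (0 : ℝ)).const_sub 1) (by norm_num)).congr_deriv (by norm_num)
  exact ((h.log (by norm_num)).const_mul (1 / 2 : ℝ)).congr_deriv (by norm_num)

lemma hasDerivAt_tanh_zero : HasDerivAt Real.tanh 1 0 := by
  have h := (Real.hasDerivAt_sinh 0).div (Real.hasDerivAt_cosh 0) (by simp)
  rw [show Real.sinh / Real.cosh = Real.tanh from
    funext fun t => (Real.tanh_eq_sinh_div_cosh t).symm] at h
  simpa using h

lemma HasDerivAt.tendsto_dslope_comp {𝕜 F : Type*} [NontriviallyNormedField 𝕜]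
    [NormedAddCommGroup F] [NormedSpace 𝕜 F] {g : 𝕜 → F} {g' : F} {a : 𝕜}
    (hg : HasDerivAt g g' a) {α : Type*} {l : Filter α} {f : α → 𝕜} (hf : Tendsto f l (𝓝 a)) :
    Tendsto (fun t => dslope g a (f t)) l (𝓝 g') := by
  have h := (continuousAt_dslope_same.2 hg.differentiableAt).tendsto.comp hf
  rwa [dslope_same, hg.deriv] at h

lemma div_eq_dslope_zero {𝕜 : Type*} [NontriviallyNormedField 𝕜] {g : 𝕜 → 𝕜} (hg : g 0 = 0)
    {s : 𝕜} (hs : s ≠ 0) :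
    g s / s = dslope g 0 s := by
  rw [dslope_of_ne _ hs, slope_def_field, hg, sub_zero, sub_zero]

lemma mAdd_flat (x y : E) : mAdd 0 x y = x + y := by
  simp [mAdd]

lemma mAdd_zero (κ : ℝ) (x : E) : mAdd κ x 0 = x := by
  simp [mAdd]

lemma continuousAt_mAdd_flat (x y : E) :
    ContinuousAt (fun p : ℝ × E × E => mAdd p.1 p.2.1 p.2.2) (0, x, y) := by
  unfold mAdd
  fun_prop (disch := simp)

lemma Filter.Tendsto.mAdd_flat {α : Type*} {l : Filter α} {κ : α → ℝ} {a b : α → E} {x y : E}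
    (hκ : Tendsto κ l (𝓝 0)) (ha : Tendsto a l (𝓝 x)) (hb : Tendsto b l (𝓝 y)) :
    Tendsto (fun t => mAdd (κ t) (a t) (b t)) l (𝓝 (x + y)) := by
  have h := (continuousAt_mAdd_flat x y).tendsto.comp (hκ.prodMk_nhds (ha.prodMk_nhds hb))
  rwa [_root_.mAdd_flat] at h

lemma tendsto_lam_flat {F : Type*} [NormedAddCommGroup F] (x : F) :
    Tendsto (fun κ => lam κ x) (𝓝 0) (𝓝 2) := by
  have h : ContinuousAt (fun κ : ℝ => lam κ x) 0 := by
    unfold lam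
    fun_prop (disch := simp)
  simpa [lam] using h.tendsto

lemma tendsto_sqrt_neg_zero : Tendsto (fun κ : ℝ => √(-κ)) (𝓝 0) (𝓝 0) :=
  (by fun_prop : Continuous fun κ : ℝ => √(-κ)).tendsto' 0 0 (by simp)

lemma logMap_eq_dslope {κ : ℝ} (hκ : κ < 0) (x y : E) :
    logMap κ x y = (2 / lam κ x * dslope _root_.artanh 0 (√(-κ) * ‖mAdd κ (-x) y‖)) •
      mAdd κ (-x) y := by
  rw [logMap]
  set u := mAdd κ (-x) y
  obtain hu | hu := eq_or_ne u 0
  · simp [hu]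
  have hc : √(-κ) ≠ 0 := (Real.sqrt_pos.2 (neg_pos.2 hκ)).ne'
  have hu' : ‖u‖ ≠ 0 := norm_ne_zero_iff.2 hu
  rw [← div_eq_dslope_zero (by simp [_root_.artanh]) (mul_ne_zero hc hu')]
  congr 1
  field_simp

lemma expMap_eq_dslope {κ : ℝ} (hκ : κ < 0) (x v : E) :
    expMap κ x v =
      mAdd κ x ((lam κ x / 2 * dslope Real.tanh 0 (√(-κ) * lam κ x * ‖v‖ / 2)) • v) := by
  obtain rfl | hv := eq_or_ne v 0
  · simp [expMap, mAdd_zero]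
  obtain hl | hl := eq_or_ne (lam κ x) 0
  · simp [expMap, hv, hl]
  have hc : √(-κ) ≠ 0 := (Real.sqrt_pos.2 (neg_pos.2 hκ)).ne'
  have hv' : ‖v‖ ≠ 0 := norm_ne_zero_iff.2 hv
  rw [expMap, if_neg hv, ← div_eq_dslope_zero Real.tanh_zero (by positivity)]
  congr 2
  field_simp

theorem tendsto_logMap_flat (x y : E) :
    Tendsto (fun κ => logMap κ x y) (𝓝[<] 0) (𝓝 (y - x)) := by
  have hκ₀ : Tendsto (fun κ : ℝ => κ) (𝓝[<] 0) (𝓝 0) := nhdsWithin_le_nhds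
  have hu : Tendsto (fun κ => mAdd κ (-x) y) (𝓝[<] 0) (𝓝 (y - x)) := by
    simpa [neg_add_eq_sub] using
      hκ₀.mAdd_flat (tendsto_const_nhds (x := -x)) (tendsto_const_nhds (x := y))
  have hcoef : Tendsto (fun κ => 2 / lam κ x * dslope _root_.artanh 0 (√(-κ) * ‖mAdd κ (-x) y‖))
      (𝓝[<] 0) (𝓝 1) := by
    have hs := hasDerivAt_artanh_zero.tendsto_dslope_comp
      (f := fun κ => √(-κ) * ‖mAdd κ (-x) y‖)
      (by simpa using (tendsto_sqrt_neg_zero.mono_left nhdsWithin_le_nhds).mul hu.norm)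
    simpa using ((tendsto_const_nhds (x := (2 : ℝ))).div
      ((tendsto_lam_flat x).mono_left nhdsWithin_le_nhds) two_ne_zero).mul hs
  refine (one_smul ℝ (y - x) ▸ hcoef.smul hu).congr' ?_
  filter_upwards [self_mem_nhdsWithin] with κ hneg using (logMap_eq_dslope hneg x y).symm

theorem tendsto_expMap_flat (x : E) {v : ℝ → E} {v₀ : E} (hv : Tendsto v (𝓝[<] 0) (𝓝 v₀)) :
    Tendsto (fun κ => expMap κ x (v κ)) (𝓝[<] 0) (𝓝 (x + v₀)) := by
  have hκ₀ : Tendsto (fun κ : ℝ => κ) (𝓝[<] 0) (𝓝 0) := nhdsWithin_le_nhds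
  have hlam := (tendsto_lam_flat x).mono_left (nhdsWithin_le_nhds (s := Set.Iio 0))
  have hcoef : Tendsto (fun κ => lam κ x / 2 * dslope Real.tanh 0 (√(-κ) * lam κ x * ‖v κ‖ / 2))
      (𝓝[<] 0) (𝓝 1) := by
    have hs := hasDerivAt_tanh_zero.tendsto_dslope_comp
      (f := fun κ => √(-κ) * lam κ x * ‖v κ‖ / 2) (by simpa using
        (((tendsto_sqrt_neg_zero.mono_left nhdsWithin_le_nhds).mul hlam).mul hv.norm).div_const 2)
    simpa using (hlam.div_const 2).mul hs
  refine (hκ₀.mAdd_flat tendsto_const_nhds (by simpa using hcoef.smul hv)).congr' ?_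
  filter_upwards [self_mem_nhdsWithin] with κ hneg using (expMap_eq_dslope hneg x (v κ)).symm

theorem euler_step_flat_limit_general (x w : E) (τ : ℝ) :
    Tendsto (fun κ : ℝ => expMap κ x (τ • logMap κ x w)) (nhdsWithin 0 (Set.Iio 0))
      (nhds (x + τ • (w - x))) :=
  tendsto_expMap_flat x ((tendsto_logMap_flat x w).const_smul τ)

theorem euler_step_flat_limit (x w : E) (hxw : x ≠ w)
    (τ : ℝ) (hτ0 : 0 < τ) (hτ1 : τ ≤ 1) :
    Tendsto (fun κ : ℝ => expMap κ x (τ • logMap κ x w)) (nhdsWithin 0 (Set.Iio 0))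
      (nhds (x + τ • (w - x))) :=
  euler_step_flat_limit_general x w τ
end
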